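/- Let τ > 0 and σ ∈ (0,1), and define G(x) = ( (τ + σ·(1 + 2x))² + 4x(x+1)(1 − σ²) )^{−1/2} for x ≥ 0. Then there exists a constant C > 0 (depending on τ and σ) such that for all x ≥ 0: |G(x)| ≤ C·(x² + 1)^{−1/2}, (x+1)·|G′(x)| ≤ C·(x² + 1)^{−1/2}, and x(x+1)·|G″(x)| ≤ C·(x² + 1)^{−1/2}. -/

import Mathlib

/-!
`G = Q^{-1/2}` for the quadratic `Q(x) = 4x² + 4(στ+1)x + (τ+σ)²`, whose coefficients are positive.
On `x ≥ 0` such a quadratic is comparable to `(x+1)²` and `|Q'| ≲ x+1`, `Q'' = const`, so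
`G ≲ (x+1)⁻¹`, `G' ≲ (x+1)⁻²` and `G'' ≲ (x+1)⁻³`; finally `√(x²+1) ≤ x+1`.
-/

/-- The function `G(x) = ((τ + σ(1+2x))² + 4x(x+1)(1−σ²))^{−1/2}`, i.e.
`((τ + sin α₂ cosh t)² + sinh²t cos²α₂)^{−1/2}` in the variable `x = sinh²(t/2)`
with `σ = sin α₂`. -/
noncomputable def Gfun (τ σ : ℝ) (x : ℝ) : ℝ :=
  (Real.sqrt ((τ + σ * (1 + 2*x))^2 + 4*x*(x+1)*(1 - σ^2)))⁻¹

open Filter Topology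

lemma hasDerivAt_inv_sqrt {f : ℝ → ℝ} {f' x : ℝ} (hf : HasDerivAt f f' x) (hx : 0 < f x) :
    HasDerivAt (fun y => (√(f y))⁻¹) (-f' / (2 * √(f x) ^ 3)) x := by
  have hs : 0 < √(f x) := Real.sqrt_pos.mpr hx
  refine ((hf.sqrt hx.ne').inv hs.ne').congr_deriv ?_
  rw [← Real.sq_sqrt hx.le]
  field_simp

lemma hasDerivAt_neg_div_two_mul_sqrt_pow_three {f f' : ℝ → ℝ} {f'' x : ℝ}
    (hf : HasDerivAt f (f' x) x) (hf' : HasDerivAt f' f'' x) (hx : 0 < f x) :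
    HasDerivAt (fun y => -f' y / (2 * √(f y) ^ 3))
      ((3 * f' x ^ 2 - 2 * f'' * f x) / (4 * √(f x) ^ 5)) x := by
  have hs : 0 < √(f x) := Real.sqrt_pos.mpr hx
  refine (hf'.neg.div (((hf.sqrt hx.ne').pow 3).const_mul 2)
    (by simp only [Pi.pow_apply]; positivity)).congr_deriv ?_
  simp only [Pi.pow_apply, Pi.neg_apply]
  set s := √(f x)
  have hsq : f x = s ^ 2 := (Real.sq_sqrt hx.le).symm
  rw [hsq]
  field_simp
  ring

lemma deriv_deriv_inv_sqrt {f f' : ℝ → ℝ} {f'' x : ℝ} (hf : ∀ y, HasDerivAt f (f' y) y)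
    (hf' : HasDerivAt f' f'' x) (hx : 0 < f x) :
    deriv (deriv fun y => (√(f y))⁻¹) x = (3 * f' x ^ 2 - 2 * f'' * f x) / (4 * √(f x) ^ 5) := by
  have hderiv : deriv (fun y => (√(f y))⁻¹) =ᶠ[𝓝 x] fun y => -f' y / (2 * √(f y) ^ 3) := by
    filter_upwards [(hf x).continuousAt.eventually (lt_mem_nhds hx)] with y hy
    exact (hasDerivAt_inv_sqrt (hf y) hy).deriv
  rw [hderiv.deriv_eq, (hasDerivAt_neg_div_two_mul_sqrt_pow_three (hf x) hf' hx).deriv]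

lemma div_add_one_le_mul_inv_sqrt {x D : ℝ} (hx : 0 ≤ x) (hD : 0 ≤ D) :
    D / (x + 1) ≤ D * (√(x ^ 2 + 1))⁻¹ := by
  rw [← div_eq_mul_inv]
  refine div_le_div_of_nonneg_left hD (by positivity) ?_
  rw [Real.sqrt_le_left (by positivity)]
  nlinarith

def quad (a b c x : ℝ) : ℝ := a * x ^ 2 + b * x + c

section Quadratic

variable {a b c : ℝ}

lemma hasDerivAt_quad (a b c x : ℝ) : HasDerivAt (quad a b c) (2 * a * x + b) x := by
  refine ((((hasDerivAt_pow 2 x).const_mul a).add ((hasDerivAt_id x).const_mul b)).add_const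
    c).congr_deriv ?_
  ring

lemma exists_mul_add_one_le_sqrt_quad (ha : 0 < a) (hb : 0 ≤ b) (hc : 0 < c) :
    ∃ k > 0, ∀ x, 0 ≤ x → k * (x + 1) ≤ √(quad a b c x) := by
  set m := min a c / 2
  have hm : 0 < m := by positivity
  refine ⟨√m, Real.sqrt_pos.mpr hm, fun x hx => ?_⟩
  rw [Real.le_sqrt (by positivity) (by unfold quad; positivity), mul_pow, Real.sq_sqrt hm.le]
  have hmin : 0 < min a c := lt_min ha hc
  calc m * (x + 1) ^ 2 ≤ min a c * (x ^ 2 + 1) := by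
        simp only [m]; nlinarith [mul_nonneg hmin.le (sq_nonneg (x - 1))]
    _ ≤ a * x ^ 2 + c := by nlinarith [min_le_left a c, min_le_right a c, sq_nonneg x]
    _ ≤ quad a b c x := by unfold quad; nlinarith [mul_nonneg hb hx]

lemma quad_le_mul_add_one_sq (ha : 0 ≤ a) (hb : 0 ≤ b) (hc : 0 ≤ c) {x : ℝ} (hx : 0 ≤ x) :
    quad a b c x ≤ (a + b + c) * (x + 1) ^ 2 := by
  unfold quad
  nlinarith [mul_nonneg ha (mul_nonneg hx hx), mul_nonneg hb hx, mul_nonneg hc hx,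
    mul_nonneg ha hx, mul_nonneg hb (mul_nonneg hx hx), mul_nonneg hc (mul_nonneg hx hx)]

variable {k : ℝ} (hk : 0 < k) (hkQ : ∀ x, 0 ≤ x → k * (x + 1) ≤ √(quad a b c x))
include hk hkQ

lemma abs_inv_sqrt_quad_le {x : ℝ} (hx : 0 ≤ x) : |(√(quad a b c x))⁻¹| ≤ k⁻¹ / (x + 1) := by
  have hs : 0 < k * (x + 1) := by positivity
  rw [abs_of_pos (inv_pos.mpr (hs.trans_le (hkQ x hx))), div_eq_mul_inv, ← mul_inv]
  exact inv_anti₀ hs (hkQ x hx)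

lemma add_one_mul_abs_deriv_inv_sqrt_quad_le (ha : 0 ≤ a) (hb : 0 ≤ b) {x : ℝ} (hx : 0 ≤ x) :
    (x + 1) * |deriv (fun y => (√(quad a b c y))⁻¹) x| ≤ (2 * a + b) / (2 * k ^ 3) / (x + 1) := by
  have hs : 0 < k * (x + 1) := by positivity
  have hQ : 0 < quad a b c x := Real.sqrt_pos.mp (hs.trans_le (hkQ x hx))
  rw [(hasDerivAt_inv_sqrt (hasDerivAt_quad a b c x) hQ).deriv, abs_div, abs_neg,
    abs_of_nonneg (by positivity : 0 ≤ 2 * a * x + b), abs_of_pos (by positivity)]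
  calc (x + 1) * ((2 * a * x + b) / (2 * √(quad a b c x) ^ 3))
      ≤ (x + 1) * ((2 * a + b) * (x + 1) / (2 * (k * (x + 1)) ^ 3)) := by
        gcongr
        · nlinarith
        · exact hkQ x hx
    _ = (2 * a + b) / (2 * k ^ 3) / (x + 1) := by field_simp

lemma mul_add_one_mul_abs_deriv_deriv_inv_sqrt_quad_le (ha : 0 ≤ a) (hb : 0 ≤ b) (hc : 0 ≤ c)
    {x : ℝ} (hx : 0 ≤ x) :
    x * (x + 1) * |deriv (deriv fun y => (√(quad a b c y))⁻¹) x| ≤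
      (3 * (2 * a + b) ^ 2 + 4 * a * (a + b + c)) / (4 * k ^ 5) / (x + 1) := by
  have hs : 0 < k * (x + 1) := by positivity
  have hQ : 0 < quad a b c x := Real.sqrt_pos.mp (hs.trans_le (hkQ x hx))
  have hf' : HasDerivAt (fun y => 2 * a * y + b) (2 * a) x := by
    simpa using ((hasDerivAt_id x).const_mul (2 * a)).add_const b
  have hsQ : 0 < √(quad a b c x) := Real.sqrt_pos.mpr hQ
  rw [deriv_deriv_inv_sqrt (hasDerivAt_quad a b c) hf' hQ, abs_div,
    abs_of_pos (a := 4 * √(quad a b c x) ^ 5) (by positivity)]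
  have hnum : |3 * (2 * a * x + b) ^ 2 - 2 * (2 * a) * quad a b c x| ≤
      3 * (2 * a * x + b) ^ 2 + 4 * a * quad a b c x := by
    rw [abs_le]; constructor <;> nlinarith [mul_nonneg ha hQ.le, sq_nonneg (2 * a * x + b)]
  calc x * (x + 1) * (|3 * (2 * a * x + b) ^ 2 - 2 * (2 * a) * quad a b c x| /
        (4 * √(quad a b c x) ^ 5))
      ≤ (x + 1) * (x + 1) * ((3 * (2 * a * x + b) ^ 2 + 4 * a * quad a b c x) /
        (4 * √(quad a b c x) ^ 5)) := by gcongr; linarith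
    _ ≤ (x + 1) * (x + 1) * ((3 * ((2 * a + b) * (x + 1)) ^ 2 +
        4 * a * ((a + b + c) * (x + 1) ^ 2)) / (4 * (k * (x + 1)) ^ 5)) := by
        gcongr
        · nlinarith
        · exact quad_le_mul_add_one_sq ha hb hc hx
        · exact hkQ x hx
    _ = (3 * (2 * a + b) ^ 2 + 4 * a * (a + b + c)) / (4 * k ^ 5) / (x + 1) := by
        field_simp

end Quadratic

theorem exists_inv_sqrt_quad_decay {a b c : ℝ} (ha : 0 < a) (hb : 0 ≤ b) (hc : 0 < c) :
    ∃ C > 0, ∀ x, 0 ≤ x →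
      |(√(quad a b c x))⁻¹| ≤ C * (√(x ^ 2 + 1))⁻¹ ∧
      (x + 1) * |deriv (fun y => (√(quad a b c y))⁻¹) x| ≤ C * (√(x ^ 2 + 1))⁻¹ ∧
      x * (x + 1) * |deriv (deriv fun y => (√(quad a b c y))⁻¹) x| ≤ C * (√(x ^ 2 + 1))⁻¹ := by
  obtain ⟨k, hk, hkQ⟩ := exists_mul_add_one_le_sqrt_quad ha hb hc
  set D₀ := k⁻¹
  set D₁ := (2 * a + b) / (2 * k ^ 3)
  set D₂ := (3 * (2 * a + b) ^ 2 + 4 * a * (a + b + c)) / (4 * k ^ 5)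
  have hD₀ : 0 < D₀ := by positivity
  have hD₁ : 0 < D₁ := by positivity
  have hD₂ : 0 < D₂ := by positivity
  refine ⟨D₀ + D₁ + D₂, by positivity, fun x hx => ?_⟩
  have hbound : ∀ D, 0 ≤ D → D ≤ D₀ + D₁ + D₂ →
      D / (x + 1) ≤ (D₀ + D₁ + D₂) * (√(x ^ 2 + 1))⁻¹ := fun D hD hDC =>
    (div_le_div_of_nonneg_right hDC (by positivity)).trans
      (div_add_one_le_mul_inv_sqrt hx (by positivity))
  refine ⟨?_, ?_, ?_⟩
  · exact (abs_inv_sqrt_quad_le hk hkQ hx).trans (hbound D₀ hD₀.le (by linarith))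
  · exact (add_one_mul_abs_deriv_inv_sqrt_quad_le hk hkQ ha.le hb hx).trans
      (hbound D₁ hD₁.le (by linarith))
  · exact (mul_add_one_mul_abs_deriv_deriv_inv_sqrt_quad_le hk hkQ ha.le hb hc.le hx).trans
      (hbound D₂ hD₂.le (by linarith))

/-- decay bounds for `G` and its first two derivatives. -/
theorem stmt_19 (τ σ : ℝ) (hτ : 0 < τ) (hσ : σ ∈ Set.Ioo (0:ℝ) 1) :
    ∃ C : ℝ, 0 < C ∧ ∀ x : ℝ, 0 ≤ x →
      |Gfun τ σ x| ≤ C * (Real.sqrt (x^2 + 1))⁻¹ ∧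
      (x + 1) * |deriv (Gfun τ σ) x| ≤ C * (Real.sqrt (x^2 + 1))⁻¹ ∧
      x * (x + 1) * |deriv (deriv (Gfun τ σ)) x| ≤ C * (Real.sqrt (x^2 + 1))⁻¹ := by
  have hG : Gfun τ σ = fun x => (√(quad 4 (4 * (σ * τ + 1)) ((τ + σ) ^ 2) x))⁻¹ := by
    funext x
    unfold Gfun quad
    ring_nf
  have hb : 0 ≤ 4 * (σ * τ + 1) := by nlinarith [mul_pos hσ.1 hτ]
  have hc : 0 < (τ + σ) ^ 2 := pow_pos (by linarith [hσ.1]) 2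
  rw [hG]
  exact exists_inv_sqrt_quad_decay (by norm_num) hb hc
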